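/- arXiv:1910.13384 — 2 statements merged into one kernel-verified Lean document; each statement's English description precedes it below -/
import Mathlib

section
/- Let P be a set of primes, R > 1 a real number, and ν a function on P with 1 ≤ ν(p) < p for all p ∈ P. Let y : ℕ → ℝ be supported on squarefree integers r < R all of whose prime factors lie in P. For squarefree d all of whose prime factors lie in P define λ_d = μ(d)·(∏_{p | d} p/ν(p))·∑_{r : d | r} y_r ∏_{p | r} ν(p)/(p − ν(p)), and set λ_d = 0 for all other d. Then ∑_{d,e} λ_d λ_e ∏_{p | d·e} ν(p)/p = ∑_r y_r² ∏_{p | r} ν(p)/(p − ν(p)), where all products are over primes. -/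
/-!
Write `g(r) = ∏_{p ∣ r} ν(p) / (p - ν(p))` and `λ_d = A_d ∏_{p ∣ d} p / ν(p)` with
`A_d = μ(d) ∑_{d ∣ r} y_r g(r)`. For squarefree `d, e` the weight
`(∏_{p ∣ d} p/ν(p)) (∏_{p ∣ e} p/ν(p)) ∏_{p ∣ de} ν(p)/p` is `∏_{p ∣ (d,e)} p/ν(p)`, and since
`p/ν(p) = 1 + 1/g(p)` this equals `∑_{k ∣ (d,e)} 1/g(k)`. The quadratic form is therefore
`∑_k (1/g(k)) (∑_{k ∣ d} A_d)²`, and Möbius inversion over the squarefree support of `y` gives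
`∑_{k ∣ d} A_d = μ(k) y_k g(k)`.
-/

open ArithmeticFunction Finset
open scoped ArithmeticFunction.Moebius

theorem Nat.prod_primeFactors_one_add_of_squarefree {R : Type*} [CommSemiring R] (f : ℕ → R)
    {n : ℕ} (hn : Squarefree n) :
    ∏ p ∈ n.primeFactors, (1 + f p) = ∑ d ∈ n.divisors, ∏ p ∈ d.primeFactors, f p := by
  convert (IsMultiplicative.prodPrimeFactors f).prodPrimeFactors_one_add_of_squarefree hn
    using 2 with p hp d hd
  · rw [prodPrimeFactors_apply (Nat.prime_of_mem_primeFactors hp).ne_zero,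
      (Nat.prime_of_mem_primeFactors hp).primeFactors, prod_singleton]
  · exact (prodPrimeFactors_apply (Nat.pos_of_mem_divisors hd).ne').symm

theorem Nat.prod_primeFactors_mul_eq_mul_div_prod_primeFactors_gcd {K : Type*} [Field K]
    {f : ℕ → K} {d e : ℕ} (hd : d ≠ 0) (he : e ≠ 0)
    (hf : ∀ p ∈ (d.gcd e).primeFactors, f p ≠ 0) :
    ∏ p ∈ (d * e).primeFactors, f p =
      (∏ p ∈ d.primeFactors, f p) * (∏ p ∈ e.primeFactors, f p) /
        ∏ p ∈ (d.gcd e).primeFactors, f p := by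
  rw [Nat.primeFactors_gcd hd he] at hf ⊢
  rw [Nat.primeFactors_mul hd he, ← prod_union_inter,
    mul_div_cancel_right₀ _ (prod_ne_zero_iff.2 hf)]

theorem Nat.divisors_eq_filter_range {n N : ℕ} (hn : n < N) :
    n.divisors = {k ∈ range N | k ∣ n ∧ n ≠ 0} := by
  ext k
  simp only [Nat.mem_divisors, mem_filter, mem_range, iff_and_self]
  exact fun ⟨hk, hn0⟩ => (Nat.le_of_dvd (Nat.pos_of_ne_zero hn0) hk).trans_lt hn

theorem ArithmeticFunction.sum_divisors_moebius {R : Type*} [Ring R] (n : ℕ) :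
    ∑ d ∈ n.divisors, (μ d : R) = if n = 1 then 1 else 0 := by
  rw [← one_apply, ← coe_moebius_mul_coe_zeta, coe_mul_zeta_apply]
  simp

theorem ArithmeticFunction.sum_divisors_filter_dvd_moebius_of_squarefree {R : Type*} [Ring R]
    {k r : ℕ} (hr : Squarefree r) :
    ∑ d ∈ r.divisors with k ∣ d, (μ d : R) = if k = r then (μ k : R) else 0 := by
  by_cases hkr : k ∣ r
  · obtain ⟨m, rfl⟩ := hkr
    have hk : k ≠ 0 := left_ne_zero_of_mul hr.ne_zero
    have hfilter : {d ∈ (k * m).divisors | k ∣ d} = m.divisors.image (k * ·) := by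
      ext d
      simp only [mem_filter, Nat.mem_divisors, mem_image]
      constructor
      · rintro ⟨⟨hd, -⟩, e, rfl⟩
        exact ⟨e, ⟨Nat.dvd_of_mul_dvd_mul_left (Nat.pos_of_ne_zero hk) hd,
          right_ne_zero_of_mul hr.ne_zero⟩, rfl⟩
      · rintro ⟨e, ⟨he, -⟩, rfl⟩
        exact ⟨⟨mul_dvd_mul_left k he, hr.ne_zero⟩, dvd_mul_right k e⟩
    have hmul : ∀ e ∈ m.divisors, (μ (k * e) : R) = μ k * μ e := fun e he => by
      rw [isMultiplicative_moebius.map_mul_of_coprime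
        ((Nat.coprime_of_squarefree_mul hr).coprime_dvd_right (Nat.dvd_of_mem_divisors he)),
        Int.cast_mul]
    rw [hfilter, sum_image fun _ _ _ _ => Nat.eq_of_mul_eq_mul_left (Nat.pos_of_ne_zero hk),
      sum_congr rfl hmul, ← mul_sum, sum_divisors_moebius]
    simp only [eq_comm (a := k), Nat.mul_eq_left hk, mul_ite, mul_one, mul_zero]
  · rw [filter_false_of_mem fun d hd hkd => hkr (hkd.trans (Nat.dvd_of_mem_divisors hd)),
      sum_empty, if_neg (by rintro rfl; exact hkr dvd_rfl)]

theorem ArithmeticFunction.sum_filter_dvd_moebius_mul_sum_filter_dvd {R : Type*} [CommRing R]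
    {f : ℕ → R} (hf : ∀ r, f r ≠ 0 → Squarefree r) {N k : ℕ} (hk : k < N) :
    ∑ d ∈ range N with k ∣ d, μ d * ∑ r ∈ range N with d ∣ r, f r = μ k * f k := by
  calc _ = ∑ r ∈ range N, ∑ d ∈ range N with k ∣ d ∧ d ∣ r, μ d * f r := by
        simp only [mul_sum]
        exact sum_comm' fun d r => by simp only [mem_filter]; tauto
    _ = ∑ r ∈ range N, (∑ d ∈ r.divisors with k ∣ d, (μ d : R)) * f r := by
        refine sum_congr rfl fun r hr => ?_
        by_cases hfr : f r = 0
        · simp [hfr]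
        have hr0 := (hf r hfr).ne_zero
        rw [sum_mul, Nat.divisors_eq_filter_range (mem_range.1 hr), filter_filter]
        exact sum_congr (filter_congr fun d _ => by tauto) fun _ _ => rfl
    _ = ∑ r ∈ range N, if k = r then μ k * f r else 0 := by
        refine sum_congr rfl fun r _ => ?_
        by_cases hfr : f r = 0
        · simp [hfr]
        rw [sum_divisors_filter_dvd_moebius_of_squarefree (hf r hfr), ite_mul, zero_mul]
    _ = μ k * f k := by rw [sum_ite_eq, if_pos (mem_range.2 hk)]

theorem sum_range_sum_range_mul_sum_divisors_gcd {R : Type*} [CommSemiring R] {a : ℕ → R}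
    (ha : a 0 = 0) (G : ℕ → R) (N : ℕ) :
    ∑ d ∈ range N, ∑ e ∈ range N, a d * a e * ∑ k ∈ (d.gcd e).divisors, G k =
      ∑ k ∈ range N, G k * (∑ d ∈ range N with k ∣ d, a d) ^ 2 := by
  calc _ = ∑ d ∈ range N, ∑ e ∈ range N, ∑ k ∈ range N,
        if k ∣ d ∧ k ∣ e then G k * (a d * a e) else 0 := by
        refine sum_congr rfl fun d hd => sum_congr rfl fun e _ => ?_
        rcases eq_or_ne d 0 with rfl | hd0
        · simp [ha]
        rw [Nat.divisors_eq_filter_range ((Nat.gcd_le_left e (Nat.pos_of_ne_zero hd0)).trans_lt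
          (mem_range.1 hd))]
        simp only [sum_filter, mul_sum, Nat.dvd_gcd_iff, ne_eq, Nat.gcd_eq_zero_iff, hd0,
          false_and, not_false_eq_true, and_true]
        exact sum_congr rfl fun k _ => by split_ifs <;> ring
    _ = ∑ k ∈ range N, ∑ d ∈ range N, ∑ e ∈ range N,
        if k ∣ d ∧ k ∣ e then G k * (a d * a e) else 0 :=
        (sum_congr rfl fun _ _ => sum_comm).trans sum_comm
    _ = _ := sum_congr rfl fun k _ => by
        rw [sq, sum_mul_sum, mul_sum]
        simp only [mul_sum, sum_filter, ite_and, ite_sum_zero, mul_ite, mul_zero]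

theorem prod_div_mul_prod_div_mul_prod_primeFactors_mul_eq_sum_divisors_gcd {K : Type*} [Field K]
    [CharZero K] {ν : ℕ → K} {d e : ℕ} (hd : Squarefree d) (he : e ≠ 0)
    (hν : ∀ p ∈ (d * e).primeFactors, ν p ≠ 0) :
    (∏ p ∈ d.primeFactors, (p : K) / ν p) * (∏ p ∈ e.primeFactors, (p : K) / ν p) *
        ∏ p ∈ (d * e).primeFactors, ν p / (p : K) =
      ∑ k ∈ (d.gcd e).divisors, ∏ p ∈ k.primeFactors, (ν p / ((p : K) - ν p))⁻¹ := by
  have hde : d * e ≠ 0 := mul_ne_zero hd.ne_zero he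
  have hne : ∀ {n}, n ∣ d * e → ∀ p ∈ n.primeFactors, ν p / (p : K) ≠ 0 := fun hn p hp =>
    have hp' := Nat.primeFactors_mono hn hde hp
    div_ne_zero (hν p hp') (Nat.cast_ne_zero.2 (Nat.prime_of_mem_primeFactors hp').ne_zero)
  have hinv : ∀ n : ℕ, ∏ p ∈ n.primeFactors, (p : K) / ν p =
      (∏ p ∈ n.primeFactors, ν p / (p : K))⁻¹ := fun n => by
    rw [← prod_inv_distrib]; simp only [inv_div]
  have hgcd : d.gcd e ∣ d * e := (Nat.gcd_dvd_left d e).trans (dvd_mul_right d e)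
  have hexpand : ∏ p ∈ (d.gcd e).primeFactors, (p : K) / ν p =
      ∏ p ∈ (d.gcd e).primeFactors, (1 + (ν p / ((p : K) - ν p))⁻¹) :=
    prod_congr rfl fun p hp => by
      rw [inv_div, one_add_div (hν p (Nat.primeFactors_mono hgcd hde hp)), add_sub_cancel]
  rw [← Nat.prod_primeFactors_one_add_of_squarefree _
      (hd.squarefree_of_dvd (Nat.gcd_dvd_left d e)), ← hexpand, hinv, hinv, hinv,
    Nat.prod_primeFactors_mul_eq_mul_div_prod_primeFactors_gcd hd.ne_zero he (hne hgcd)]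
  have := prod_ne_zero_iff.2 (hne (dvd_mul_right d e))
  have := prod_ne_zero_iff.2 (hne (dvd_mul_left e d))
  field_simp

theorem mul_prod_div_mul_mul_prod_div_mul_prod_primeFactors_mul {K : Type*} [Field K]
    [CharZero K] {ν A : ℕ → K}
    (hA : ∀ d, A d ≠ 0 → Squarefree d ∧ ∀ p ∈ d.primeFactors, ν p ≠ 0) (d e : ℕ) :
    (A d * ∏ p ∈ d.primeFactors, (p : K) / ν p) * (A e * ∏ p ∈ e.primeFactors, (p : K) / ν p) *
        ∏ p ∈ (d * e).primeFactors, ν p / (p : K) =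
      A d * A e * ∑ k ∈ (d.gcd e).divisors, ∏ p ∈ k.primeFactors, (ν p / ((p : K) - ν p))⁻¹ := by
  rcases eq_or_ne (A d) 0 with hd | hd
  · simp [hd]
  rcases eq_or_ne (A e) 0 with he | he
  · simp [he]
  obtain ⟨hdsq, hdν⟩ := hA d hd
  obtain ⟨hesq, heν⟩ := hA e he
  have hν : ∀ p ∈ (d * e).primeFactors, ν p ≠ 0 := fun p hp => by
    rw [Nat.primeFactors_mul hdsq.ne_zero hesq.ne_zero, mem_union] at hp
    exact hp.elim (hdν p) (heν p)
  rw [← prod_div_mul_prod_div_mul_prod_primeFactors_mul_eq_sum_divisors_gcd hdsq hesq.ne_zero hν]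
  ring

theorem ArithmeticFunction.prod_inv_mul_sq_sum_filter_dvd_moebius_mul {K : Type*} [Field K]
    {h y : ℕ → K} (hy : ∀ r, y r ≠ 0 → Squarefree r) {N k : ℕ} (hk : k < N) :
    (∏ p ∈ k.primeFactors, (h p)⁻¹) *
        (∑ d ∈ range N with k ∣ d,
          μ d * ∑ r ∈ range N with d ∣ r, y r * ∏ p ∈ r.primeFactors, h p) ^ 2 =
      y k ^ 2 * ∏ p ∈ k.primeFactors, h p := by
  rw [sum_filter_dvd_moebius_mul_sum_filter_dvd (fun r hr => hy r (left_ne_zero_of_mul hr)) hk,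
    prod_inv_distrib]
  rcases eq_or_ne (y k) 0 with hyk | hyk
  · simp [hyk]
  have hμ : (μ k : K) ^ 2 = 1 := by
    rw [← Int.cast_pow, moebius_sq_eq_one_of_squarefree (hy k hyk), Int.cast_one]
  set g := ∏ p ∈ k.primeFactors, h p
  calc g⁻¹ * (μ k * (y k * g)) ^ 2 = (μ k : K) ^ 2 * y k ^ 2 * (g⁻¹ * g * g) := by ring
    _ = y k ^ 2 * g := by rw [hμ, inv_mul_mul_self, one_mul]

open scoped Classical in
open ArithmeticFunction in
theorem selberg_sieve_diagonalization :
    ∀ (P : Set ℕ) (R : ℝ) (ν : ℕ → ℝ) (y lam : ℕ → ℝ),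
    1 < R →
    (∀ p ∈ P, Nat.Prime p) →
    (∀ p ∈ P, 1 ≤ ν p ∧ ν p < (p : ℝ)) →
    -- y is supported on squarefree r < R with all prime factors in P
    (∀ r : ℕ, y r ≠ 0 → Squarefree r ∧ (r : ℝ) < R ∧ ∀ p : ℕ, p.Prime → p ∣ r → p ∈ P) →
    -- definition of λ
    (∀ d : ℕ, lam d = if Squarefree d ∧ (∀ p : ℕ, p.Prime → p ∣ d → p ∈ P) then
        (ArithmeticFunction.moebius d : ℝ) * (∏ p ∈ d.primeFactors, (p : ℝ) / ν p) *
          ∑ r ∈ (Finset.range ⌈R⌉₊).filter (d ∣ ·),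
            y r * ∏ p ∈ r.primeFactors, ν p / ((p : ℝ) - ν p)
      else 0) →
    -- diagonalization identity
    ∑ d ∈ Finset.range ⌈R⌉₊, ∑ e ∈ Finset.range ⌈R⌉₊,
        lam d * lam e * ∏ p ∈ (d * e).primeFactors, ν p / (p : ℝ) =
      ∑ r ∈ Finset.range ⌈R⌉₊, (y r) ^ 2 * ∏ p ∈ r.primeFactors, ν p / ((p : ℝ) - ν p) := by
  intro P R ν y lam _ _ hν hy hlam
  set A : ℕ → ℝ := fun d => μ d * ∑ r ∈ range ⌈R⌉₊ with d ∣ r,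
    y r * ∏ p ∈ r.primeFactors, ν p / ((p : ℝ) - ν p)
  have hA : ∀ d, A d ≠ 0 → Squarefree d ∧ ∀ p ∈ d.primeFactors, p ∈ P := fun d hd => by
    obtain ⟨r, hr, hyr⟩ := exists_ne_zero_of_sum_ne_zero (right_ne_zero_of_mul hd)
    refine ⟨moebius_ne_zero_iff_squarefree.1 (Int.cast_ne_zero.1 (left_ne_zero_of_mul hd)),
      fun p hp => (hy r (left_ne_zero_of_mul hyr)).2.2 p (Nat.prime_of_mem_primeFactors hp)
        ((Nat.dvd_of_mem_primeFactors hp).trans (mem_filter.1 hr).2)⟩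
  have hlam' : ∀ d, lam d = A d * ∏ p ∈ d.primeFactors, (p : ℝ) / ν p := fun d => by
    rw [hlam d]
    split_ifs with hd
    · simp only [A]; ring
    rcases eq_or_ne (A d) 0 with h | h
    · rw [h, zero_mul]
    obtain ⟨hsq, hP⟩ := hA d h
    exact absurd ⟨hsq, fun p hp hpd => hP p (Nat.mem_primeFactors.2 ⟨hp, hpd, hsq.ne_zero⟩)⟩ hd
  have hAν : ∀ d, A d ≠ 0 → Squarefree d ∧ ∀ p ∈ d.primeFactors, ν p ≠ 0 := fun d hd =>
    ⟨(hA d hd).1, fun p hp => (one_pos.trans_le (hν p ((hA d hd).2 p hp)).1).ne'⟩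
  simp only [hlam', mul_prod_div_mul_mul_prod_div_mul_prod_primeFactors_mul hAν]
  rw [sum_range_sum_range_mul_sum_divisors_gcd (by simp [A])]
  exact sum_congr rfl fun k hk => prod_inv_mul_sq_sum_filter_dvd_moebius_mul
    (fun r hr => (hy r hr).1) (mem_range.1 hk)
end

section
/- Let P be a set of primes, R > 1 a real number, and ν a function on P with 1 ≤ ν(p) < p for all p ∈ P. Let y : ℕ → ℝ be supported on squarefree integers s < R all of whose prime factors lie in P, define λ_d = μ(d)·(∏_{p | d} p/ν(p))·∑_{s : d | s} y_s ∏_{p | s} ν(p)/(p − ν(p)) for squarefree d with prime factors in P (λ_d = 0 otherwise), and define y*_r = μ(r)·(∏_{p | r} (p − ν(p))/(ν(p) − 1))·∑_{d : r | d} λ_d ∏_{p | d} (ν(p) − 1)/(p − 1) for squarefree r < R all of whose prime factors p lie in P and satisfy ν(p) ≥ 2. Then for every such r one has y*_r = r·∑_{s : r | s} y_s/φ(s). -/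
/-!
Expanding λ in the definition of y* and exchanging the two sums gives
y*_r = μ(r) ∏_{p ∣ r} (p - ν(p))/(ν(p) - 1) · ∑_s y_s ∏_{p ∣ s} ν(p)/(p - ν(p)) · ∑_{r ∣ d ∣ s} μ(d) f(d),
where f(d) = ∏_{p ∣ d} f(p) with f(p) = p (ν(p) - 1) / (ν(p) (p - 1)). For squarefree s the inner
sum is μ(r) f(r) ∏_{p ∣ s, p ∤ r} (1 - f(p)), and since 1 - f(p) = (p - ν(p)) / (ν(p) (p - 1)) the
coefficient of y_s collapses prime by prime to ∏_{p ∣ r} p/(p - 1) · ∏_{p ∣ s, p ∤ r} 1/(p - 1) = r/φ(s).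
-/

open ArithmeticFunction ArithmeticFunction.Moebius Finset

theorem Nat.sum_divisors_filter_dvd_eq_sum_divisors_mul {M : Type*} [AddCommMonoid M]
    (g : ℕ → M) {r t : ℕ} (hrt : r * t ≠ 0) :
    ∑ d ∈ (r * t).divisors.filter (r ∣ ·), g d = ∑ e ∈ t.divisors, g (r * e) := by
  have hr : 0 < r := Nat.pos_of_ne_zero (left_ne_zero_of_mul hrt)
  refine (sum_nbij' (r * ·) (· / r) ?_ ?_ ?_ ?_ fun _ _ => rfl).symm
  · intro e he
    simp only [mem_filter, Nat.mem_divisors] at he ⊢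
    exact ⟨⟨Nat.mul_dvd_mul_left r he.1, hrt⟩, dvd_mul_right r e⟩
  · intro d hd
    simp only [mem_filter, Nat.mem_divisors] at hd ⊢
    obtain ⟨⟨hdt, -⟩, u, rfl⟩ := hd
    rw [Nat.mul_div_cancel_left u hr]
    exact ⟨Nat.dvd_of_mul_dvd_mul_left hr hdt, right_ne_zero_of_mul hrt⟩
  · intro e _
    exact Nat.mul_div_cancel_left e hr
  · intro d hd
    exact Nat.mul_div_cancel' (mem_filter.1 hd).2

section Moebius

variable {R : Type*} [CommRing R]

theorem sum_divisors_moebius_mul_prod_primeFactors (f : ℕ → R) {t : ℕ} (ht : Squarefree t) :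
    ∑ e ∈ t.divisors, (μ e : R) * ∏ p ∈ e.primeFactors, f p =
      ∏ p ∈ t.primeFactors, (1 - f p) := by
  calc ∑ e ∈ t.divisors, (μ e : R) * ∏ p ∈ e.primeFactors, f p
      = ∑ e ∈ t.divisors, (μ e : R) * prodPrimeFactors f e := by
        refine sum_congr rfl fun e he => ?_
        rw [prodPrimeFactors_apply (Nat.pos_of_mem_divisors he).ne']
    _ = ∏ p ∈ t.primeFactors, (1 - prodPrimeFactors f p) :=
        ((IsMultiplicative.prodPrimeFactors f).prodPrimeFactors_one_sub_of_squarefree _ ht).symm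
    _ = ∏ p ∈ t.primeFactors, (1 - f p) := by
        refine prod_congr rfl fun p hp => ?_
        have hp := Nat.prime_of_mem_primeFactors hp
        rw [prodPrimeFactors_apply hp.ne_zero, hp.primeFactors, prod_singleton]

theorem sum_divisors_filter_dvd_moebius_mul_prod_primeFactors (f : ℕ → R) {r s : ℕ}
    (hs : Squarefree s) (hrs : r ∣ s) :
    ∑ d ∈ s.divisors.filter (r ∣ ·), (μ d : R) * ∏ p ∈ d.primeFactors, f p =
      (μ r : R) * (∏ p ∈ r.primeFactors, f p) *
        ∏ p ∈ s.primeFactors \ r.primeFactors, (1 - f p) := by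
  obtain ⟨t, rfl⟩ := hrs
  obtain ⟨hrt, -, ht⟩ := Nat.squarefree_mul_iff.1 hs
  have hmul : ∀ e ∈ t.divisors, (μ (r * e) : R) * ∏ p ∈ (r * e).primeFactors, f p =
      ((μ r : R) * ∏ p ∈ r.primeFactors, f p) * ((μ e : R) * ∏ p ∈ e.primeFactors, f p) := by
    intro e he
    have hre := hrt.coprime_dvd_right (Nat.dvd_of_mem_divisors he)
    rw [isMultiplicative_moebius.map_mul_of_coprime hre, hre.primeFactors_mul,
      prod_union hre.disjoint_primeFactors]
    push_cast
    ring
  rw [Nat.sum_divisors_filter_dvd_eq_sum_divisors_mul _ hs.ne_zero, sum_congr rfl hmul,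
    ← mul_sum, sum_divisors_moebius_mul_prod_primeFactors f ht, hrt.primeFactors_mul,
    union_sdiff_cancel_left hrt.disjoint_primeFactors]

end Moebius

theorem Nat.cast_totient_of_squarefree {K : Type*} [CommRing K] {n : ℕ} (hn : Squarefree n) :
    (n.totient : K) = ∏ p ∈ n.primeFactors, ((p : K) - 1) := by
  have h := Nat.totient_mul_prod_primeFactors n
  rw [Nat.prod_primeFactors_of_squarefree hn, mul_comm,
    Nat.mul_left_cancel_iff (Nat.pos_of_ne_zero hn.ne_zero)] at h
  rw [h, Nat.cast_prod]
  exact prod_congr rfl fun p hp => by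
    rw [Nat.cast_sub (Nat.prime_of_mem_primeFactors hp).one_le, Nat.cast_one]

theorem ystar_coeff_eq_div_totient {K : Type*} [Field K] [CharZero K] (ν : ℕ → K) {r s : ℕ}
    (hs : Squarefree s) (hrs : r ∣ s) (hν : ∀ p ∈ s.primeFactors, ν p ≠ 0 ∧ ν p ≠ p)
    (hν1 : ∀ p ∈ r.primeFactors, ν p ≠ 1) :
    (μ r : K) * (∏ p ∈ r.primeFactors, ((p : K) - ν p) / (ν p - 1)) *
      ((∑ d ∈ s.divisors.filter (r ∣ ·),
          (μ d : K) * ∏ p ∈ d.primeFactors, (p : K) / ν p * ((ν p - 1) / ((p : K) - 1))) *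
        ∏ p ∈ s.primeFactors, ν p / ((p : K) - ν p)) = r / s.totient := by
  have hsub := Nat.primeFactors_mono hrs hs.ne_zero
  rw [sum_divisors_filter_dvd_moebius_mul_prod_primeFactors _ hs hrs,
    Nat.cast_totient_of_squarefree hs, ← prod_sdiff hsub,
    ← prod_sdiff hsub (f := fun p : ℕ => (p : K) - 1)]
  set f : ℕ → K := fun p => (p : K) / ν p * ((ν p - 1) / ((p : K) - 1))
  have hr := hs.squarefree_of_dvd hrs
  have hp1 : ∀ p ∈ s.primeFactors, (p : K) - 1 ≠ 0 := fun p hp =>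
    sub_ne_zero.2 (by exact_mod_cast (Nat.prime_of_mem_primeFactors hp).one_lt.ne')
  have hdvd : ∀ p ∈ r.primeFactors,
      ((p : K) - ν p) / (ν p - 1) * f p * (ν p / ((p : K) - ν p)) = p / ((p : K) - 1) := by
    intro p hp
    obtain ⟨hν0, hνp⟩ := hν p (hsub hp)
    have := hp1 p (hsub hp)
    have := sub_ne_zero.2 (hν1 p hp)
    have := sub_ne_zero.2 hνp.symm
    simp only [f]
    field_simp
  have hndvd : ∀ p ∈ s.primeFactors \ r.primeFactors,
      (1 - f p) * (ν p / ((p : K) - ν p)) = 1 / ((p : K) - 1) := by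
    intro p hp
    obtain ⟨hν0, hνp⟩ := hν p (sdiff_subset hp)
    have := hp1 p (sdiff_subset hp)
    have := sub_ne_zero.2 hνp.symm
    simp only [f]
    field_simp
    ring
  have hμ : (μ r : K) * μ r = 1 := by
    rw [← Int.cast_mul, ← sq, moebius_sq_eq_one_of_squarefree hr, Int.cast_one]
  calc _ = ((μ r : K) * μ r) *
        (∏ p ∈ r.primeFactors, ((p : K) - ν p) / (ν p - 1) * f p * (ν p / ((p : K) - ν p))) *
        ∏ p ∈ s.primeFactors \ r.primeFactors, (1 - f p) * (ν p / ((p : K) - ν p)) := by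
        simp only [prod_mul_distrib]
        ring
    _ = _ := by
        rw [hμ, prod_congr rfl hdvd, prod_congr rfl hndvd, prod_div_distrib, prod_div_distrib,
          prod_const_one, ← Nat.cast_prod, Nat.prod_primeFactors_of_squarefree hr]
        ring

theorem sum_filter_dvd_mul_eq_zero {M : Type*} [Semiring M] {y : ℕ → M} {Q : ℕ → Prop}
    (hQ : ∀ {d s : ℕ}, d ∣ s → Q s → Q d) (hy : ∀ s, y s ≠ 0 → Q s) {d : ℕ} (hd : ¬Q d)
    (S : Finset ℕ) (G : ℕ → M) : ∑ s ∈ S.filter (d ∣ ·), y s * G s = 0 :=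
  sum_eq_zero fun s hs => by
    by_contra h
    exact hd (hQ (mem_filter.1 hs).2 (hy s (left_ne_zero_of_mul h)))

theorem sum_filter_dvd_sum_filter_dvd_comm {M : Type*} [AddCommMonoid M] (S : Finset ℕ)
    (r : ℕ) (g : ℕ → ℕ → M) :
    ∑ d ∈ S.filter (r ∣ ·), ∑ s ∈ S.filter (d ∣ ·), g d s =
      ∑ s ∈ S.filter (r ∣ ·), ∑ d ∈ S.filter (fun d => r ∣ d ∧ d ∣ s), g d s :=
  sum_comm' fun d s => by
    simp only [mem_filter]
    exact ⟨fun ⟨⟨hd, hrd⟩, hs, hds⟩ => ⟨⟨hd, hrd, hds⟩, hs, hrd.trans hds⟩,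
      fun ⟨⟨hd, hrd, hds⟩, hs, _⟩ => ⟨⟨hd, hrd⟩, hs, hds⟩⟩

theorem Nat.filter_range_dvd_and_dvd {N r s : ℕ} (hs : s ≠ 0) (hsN : s < N) :
    (range N).filter (fun d => r ∣ d ∧ d ∣ s) = s.divisors.filter (r ∣ ·) := by
  ext d
  simp only [mem_filter, mem_range, Nat.mem_divisors]
  exact ⟨fun ⟨_, hrd, hds⟩ => ⟨⟨hds, hs⟩, hrd⟩,
    fun ⟨⟨hds, _⟩, hrd⟩ => ⟨(Nat.le_of_dvd (Nat.pos_of_ne_zero hs) hds).trans_lt hsN, hrd, hds⟩⟩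

open scoped Classical in
open ArithmeticFunction ArithmeticFunction.Moebius in
theorem gpy_sieve_ystar_in_terms_of_y :
    ∀ (P : Set ℕ) (R : ℝ) (ν : ℕ → ℝ) (y lam ystar : ℕ → ℝ),
    1 < R →
    (∀ p ∈ P, Nat.Prime p) →
    (∀ p ∈ P, 1 ≤ ν p ∧ ν p < (p : ℝ)) →
    -- y is supported on squarefree s < R with all prime factors in P
    (∀ s : ℕ, y s ≠ 0 → Squarefree s ∧ (s : ℝ) < R ∧ ∀ p : ℕ, p.Prime → p ∣ s → p ∈ P) →
    -- definition of λ from y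
    (∀ d : ℕ, lam d = if Squarefree d ∧ (∀ p : ℕ, p.Prime → p ∣ d → p ∈ P) then
        (μ d : ℝ) * (∏ p ∈ d.primeFactors, (p : ℝ) / ν p) *
          ∑ s ∈ (Finset.range ⌈R⌉₊).filter (d ∣ ·),
            y s * ∏ p ∈ s.primeFactors, ν p / ((p : ℝ) - ν p)
      else 0) →
    -- definition of y* from λ
    (∀ r : ℕ, ystar r =
      if Squarefree r ∧ (r : ℝ) < R ∧ (∀ p : ℕ, p.Prime → p ∣ r → p ∈ P ∧ 2 ≤ ν p) then
        (μ r : ℝ) * (∏ p ∈ r.primeFactors, ((p : ℝ) - ν p) / (ν p - 1)) *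
          ∑ d ∈ (Finset.range ⌈R⌉₊).filter (r ∣ ·),
            lam d * ∏ p ∈ d.primeFactors, (ν p - 1) / ((p : ℝ) - 1)
      else 0) →
    -- conclusion
    ∀ r : ℕ, Squarefree r → (r : ℝ) < R → (∀ p : ℕ, p.Prime → p ∣ r → p ∈ P ∧ 2 ≤ ν p) →
      ystar r = (r : ℝ) * ∑ s ∈ (Finset.range ⌈R⌉₊).filter (r ∣ ·),
        y s / (Nat.totient s : ℝ) := by
  intro P R ν y lam ystar _ _ hν hy hlam hstar r hr hrR hrP
  have hexpand : ∀ d, lam d * ∏ p ∈ d.primeFactors, (ν p - 1) / ((p : ℝ) - 1) =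
      ∑ s ∈ (range ⌈R⌉₊).filter (d ∣ ·),
        ((μ d : ℝ) * ∏ p ∈ d.primeFactors, (p : ℝ) / ν p * ((ν p - 1) / ((p : ℝ) - 1))) *
          (y s * ∏ p ∈ s.primeFactors, ν p / ((p : ℝ) - ν p)) := by
    intro d
    rw [hlam d, prod_mul_distrib, ← mul_sum]
    split_ifs with hd
    · ring
    rw [sum_filter_dvd_mul_eq_zero (Q := fun s => Squarefree s ∧ ∀ p, p.Prime → p ∣ s → p ∈ P)
      (fun hds hs => ⟨hs.1.squarefree_of_dvd hds, fun p hp hpd => hs.2 p hp (hpd.trans hds)⟩)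
      (fun s hs => ⟨(hy s hs).1, (hy s hs).2.2⟩) hd, zero_mul, mul_zero]
  rw [hstar r, if_pos ⟨hr, hrR, hrP⟩]
  simp only [hexpand]
  rw [sum_filter_dvd_sum_filter_dvd_comm, mul_sum, mul_sum]
  refine sum_congr rfl fun s hs => ?_
  obtain ⟨hsN, hrs⟩ := mem_filter.1 hs
  by_cases hys : y s = 0
  · simp [hys]
  obtain ⟨hsq, -, hsP⟩ := hy s hys
  have hνs : ∀ p ∈ s.primeFactors, 1 ≤ ν p ∧ ν p < p := fun p hp =>
    hν p (hsP p (Nat.prime_of_mem_primeFactors hp) (Nat.dvd_of_mem_primeFactors hp))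
  rw [Nat.filter_range_dvd_and_dvd hsq.ne_zero (mem_range.1 hsN), ← sum_mul]
  linear_combination y s * ystar_coeff_eq_div_totient ν hsq hrs
    (fun p hp => ⟨(one_pos.trans_le (hνs p hp).1).ne', (hνs p hp).2.ne⟩)
    (fun p hp => by linarith [(hrP p (Nat.prime_of_mem_primeFactors hp)
      (Nat.dvd_of_mem_primeFactors hp)).2])
end
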